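/- arXiv:2512.16414 — 2 statements merged into one kernel-verified Lean document; each statement's English description precedes it below -/
import Mathlib

section
/- Let P be a preference profile, let w ∈ RV^PUT(P) be a River PUT winner, and let e_defeat = (x,w) be an edge of the margin graph M(P) incoming to w. Then for every descending linear ordering o ∈ O↓ with w ∈ RV(o,P), there is a path from w to x in the River diagram M^RV(o) whose strength is at least m_P(x,w). -/
attribute [local instance] Classical.propDecidable

/-- A preference profile: each of `m` voters has a strict linear (total) preference
relation over the alternatives `A`. -/
structure Profile (A : Type*) (m : ℕ) where
  pref : Fin m → A → A → Prop
  strict : ∀ i, IsStrictTotalOrder A (pref i)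

/-- The majority margin of `x` over `y`: the number of voters preferring `x` to `y`
minus the number of voters preferring `y` to `x`. -/
noncomputable def margin {A : Type*} [Fintype A] {m : ℕ} (P : Profile A m) (x y : A) : ℤ :=
  ((Finset.univ.filter fun i => P.pref i x y).card : ℤ) -
    ((Finset.univ.filter fun i => P.pref i y x).card : ℤ)

/-- The majority margin as a function on (potential) edges. -/
noncomputable def marginE {A : Type*} [Fintype A] {m : ℕ} (P : Profile A m) : A × A → ℤ :=
  fun e => margin P e.1 e.2

/-- The edge set of the margin graph: an edge `(x, y)` between distinct alternatives
whenever the majority margin of `x` over `y` is nonnegative. -/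
noncomputable def marginEdges {A : Type*} [Fintype A] {m : ℕ} (P : Profile A m) :
    Finset (A × A) :=
  Finset.univ.filter fun e => e.1 ≠ e.2 ∧ 0 ≤ margin P e.1 e.2

/-- `l` is a path from `x` to `y` in the digraph with edge set `E`:
a nonempty list of pairwise distinct vertices starting at `x`, ending at `y`,
whose consecutive vertices are joined by edges of `E`. -/
def IsPathFrom {V : Type*} (E : Finset (V × V)) (l : List V) (x y : V) : Prop :=
  l ≠ [] ∧ l.Nodup ∧ l.head? = some x ∧ l.getLast? = some y ∧
    l.Chain' fun a b => (a, b) ∈ E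

/-- There is a path from `x` to `y` in the digraph with edge set `E`. -/
def Reach {V : Type*} (E : Finset (V × V)) (x y : V) : Prop :=
  ∃ l, IsPathFrom E l x y

/-- The digraph with edge set `E` contains a directed cycle. -/
def HasCycle {V : Type*} (E : Finset (V × V)) : Prop :=
  ∃ f ∈ E, Reach E f.2 f.1

/-- `T` is a tree rooted at `r`: there is a unique path from `r` to every vertex,
no edge enters the root, and every vertex has at most one incoming edge. -/
def IsRootedTree {V : Type*} (T : Finset (V × V)) (r : V) : Prop :=
  (∀ v : V, ∃! l : List V, IsPathFrom T l r v) ∧ (∀ e ∈ T, e.2 ≠ r) ∧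
    ∀ e f, e ∈ T → f ∈ T → e.2 = f.2 → e = f

/-- `a` has no incoming edge in `D`. -/
def noIncoming {V : Type*} (D : Finset (V × V)) (a : V) : Prop :=
  ∀ e ∈ D, e.2 ≠ a

/-- `o` is a descending linear ordering of the edge set `E` with respect to the
margin function `marg`: an enumeration of `E` without repetition in which edges of
larger margin come before edges of smaller margin. -/
def IsDescOrdering {V : Type*} (marg : V × V → ℤ) (E : Finset (V × V))
    (o : List (V × V)) : Prop :=
  o.Nodup ∧ (∀ e, e ∈ o ↔ e ∈ E) ∧ o.Pairwise fun e f => marg f ≤ marg e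

/-- One step of the River procedure: add `e = (x, y)` to the current diagram `D` unless
(R1) `y` already has an incoming edge in `D`, or (R2) there is a path from `y` to `x`
in `D`. -/
noncomputable def riverStep {V : Type*} (D : Finset (V × V)) (e : V × V) :
    Finset (V × V) :=
  if (∃ f ∈ D, f.2 = e.2) ∨ Reach D e.2 e.1 then D else insert e D

/-- The River diagram obtained by processing the edges in the order `o`,
starting from the empty diagram. -/
noncomputable def riverFold {V : Type*} (o : List (V × V)) : Finset (V × V) :=
  o.foldl riverStep ∅

/-- One step of the semi-River process with margin function `marg`: add `e = (x, y)` to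
the current diagram `D` unless
(sR1) there is another incoming edge `e' = (z, y)` of `y` among the included edges of
margin strictly greater than `marg e` such that there is no path from `y` to `z` among
the included edges of margin at least `marg e'`, or
(sR2) within the included edges of strictly greater margin, the set of vertices having
a path to `x` avoiding all incoming edges of `y` induces an acyclic subgraph in which
`y` is the only vertex with no incoming edge. -/
noncomputable def semiRiverStep {V : Type*} (marg : V × V → ℤ) (D : Finset (V × V))
    (e : V × V) : Finset (V × V) :=
  let Sgt := D.filter fun f => marg e < marg f
  let sR1 : Prop := ∃ f ∈ Sgt, f.2 = e.2 ∧
      ¬ Reach (D.filter fun g => marg f ≤ marg g) e.2 f.1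
  let Anc : Set V := {v | Reach (Sgt.filter fun g => g.2 ≠ e.2) v e.1}
  let ind := Sgt.filter fun g => g.1 ∈ Anc ∧ g.2 ∈ Anc
  let sR2 : Prop := e.2 ∈ Anc ∧ ¬ HasCycle ind ∧
      ∀ v ∈ Anc, ((∀ g ∈ ind, g.2 ≠ v) ↔ v = e.2)
  if sR1 ∨ sR2 then D else insert e D

/-- The semi-River diagram obtained by processing the edges in the order `o`,
starting from the empty diagram. -/
noncomputable def semiRiverFold {V : Type*} (marg : V × V → ℤ) (o : List (V × V)) :
    Finset (V × V) :=
  o.foldl (semiRiverStep marg) ∅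

/-- The runs of the directed Prim algorithm on the digraph with edge set `E`, weight
function `w`, and start vertex `s`: `PrimRun E w s S T` holds if after some number of
steps the set of explored vertices is `S` and the collected tree edges are `T`; at each
step an arbitrary crossing edge of maximum weight is selected. -/
inductive PrimRun {V : Type*} {β : Type*} [LinearOrder β] (E : Finset (V × V))
    (w : V × V → β) (s : V) : Finset V → Finset (V × V) → Prop
  | init : PrimRun E w s {s} ∅
  | step {S : Finset V} {T : Finset (V × V)} (e : V × V) (he : e ∈ E)
      (h1 : e.1 ∈ S) (h2 : e.2 ∉ S)
      (hmax : ∀ f ∈ E, f.1 ∈ S → f.2 ∉ S → w f ≤ w e)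
      (hrun : PrimRun E w s S T) :
      PrimRun E w s (insert e.2 S) (insert e T)

/-- `T` is a possible output of the directed Prim algorithm on `(E, w)` started at `s`:
it is obtained by a run that has terminated, i.e. no crossing edge remains. -/
def IsPrimOutput {V : Type*} {β : Type*} [LinearOrder β] (E : Finset (V × V))
    (w : V × V → β) (s : V) (T : Finset (V × V)) : Prop :=
  ∃ S : Finset V, PrimRun E w s S T ∧ ∀ f ∈ E, f.1 ∈ S → f.2 ∈ S

/-- The strength of a path (as a list of vertices): the minimum weight of its edges,
`⊤` for a trivial path with no edges. -/
noncomputable def strength {V : Type*} (w : V × V → ℕ) (l : List V) : ℕ∞ :=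
  ((l.zip l.tail).map fun p => (w p : ℕ∞)).foldr min ⊤

/-- `l` is a strongest path from `x` to `y`: it is a path from `x` to `y` and no path
from `x` to `y` has (strictly) greater strength. -/
def IsStrongestPath {V : Type*} (E : Finset (V × V)) (w : V × V → ℕ) (l : List V)
    (x y : V) : Prop :=
  IsPathFrom E l x y ∧ ∀ l', IsPathFrom E l' x y → strength w l' ≤ strength w l

/-- `o` is a descending linear ordering of `E` in which, among edges of equal margin,
edges belonging to `E'` come before edges not belonging to `E'`. -/
def IsSetOrdering {V : Type*} (marg : V × V → ℤ) (E E' : Finset (V × V))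
    (o : List (V × V)) : Prop :=
  o.Nodup ∧ (∀ e, e ∈ o ↔ e ∈ E) ∧
    o.Pairwise fun e f => marg f ≤ marg e ∧ (marg e = marg f → f ∈ E' → e ∈ E')

/-!
The edge `(x, w)` is processed at some point of `o` and is not in the final diagram, since `w`
ends up without incoming edge. Rule (R1) cannot have rejected it for the same reason, so (R2)
did: the diagram built from the edges preceding `(x, w)` already contains a path from `w` to `x`.
Every edge of that path precedes `(x, w)` in the descending ordering `o`, so its margin is at
least `m_P(x, w)`, and the path survives in the final diagram since River never removes edges.
-/

theorem List.IsChain.rel_of_mem_zip_tail {α : Type*} {R : α → α → Prop} :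
    ∀ {l : List α}, l.IsChain R → ∀ p ∈ l.zip l.tail, R p.1 p.2
  | [], _, _, hp => by simp at hp
  | [_], _, _, hp => by simp at hp
  | a :: b :: t, hc, p, hp => by
    rw [List.isChain_cons_cons] at hc
    rw [List.tail_cons, List.zip_cons_cons, List.mem_cons] at hp
    rcases hp with rfl | hp
    · exact hc.1
    · exact hc.2.rel_of_mem_zip_tail p hp

theorem IsPathFrom.mono {V : Type*} {E E' : Finset (V × V)} (h : E ⊆ E') {l : List V}
    {x y : V} (hl : IsPathFrom E l x y) : IsPathFrom E' l x y :=
  ⟨hl.1, hl.2.1, hl.2.2.1, hl.2.2.2.1, hl.2.2.2.2.imp fun _ _ hab => h hab⟩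

theorem IsPathFrom.mem_of_mem_zip_tail {V : Type*} {E : Finset (V × V)} {l : List V}
    {x y : V} (hl : IsPathFrom E l x y) {p : V × V} (hp : p ∈ l.zip l.tail) : p ∈ E :=
  hl.2.2.2.2.rel_of_mem_zip_tail p hp

section River

variable {V : Type*}

theorem subset_riverStep (D : Finset (V × V)) (e : V × V) : D ⊆ riverStep D e := by
  unfold riverStep
  split
  · exact subset_rfl
  · exact Finset.subset_insert _ _

theorem riverStep_subset_insert (D : Finset (V × V)) (e : V × V) :
    riverStep D e ⊆ insert e D := by
  unfold riverStep
  split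
  · exact Finset.subset_insert _ _
  · exact subset_rfl

theorem subset_foldl_riverStep (l : List (V × V)) (D : Finset (V × V)) :
    D ⊆ l.foldl riverStep D := by
  induction l generalizing D with
  | nil => exact subset_rfl
  | cons e t ih => exact (subset_riverStep D e).trans (ih _)

theorem mem_of_mem_foldl_riverStep {l : List (V × V)} {D : Finset (V × V)} {f : V × V}
    (hf : f ∈ l.foldl riverStep D) : f ∈ D ∨ f ∈ l := by
  induction l generalizing D with
  | nil => exact Or.inl hf
  | cons e t ih =>
    rcases ih hf with h | h
    · rcases Finset.mem_insert.1 (riverStep_subset_insert D e h) with rfl | h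
      · exact Or.inr List.mem_cons_self
      · exact Or.inl h
    · exact Or.inr (List.mem_cons_of_mem _ h)

theorem mem_of_mem_riverFold {o : List (V × V)} {f : V × V} (hf : f ∈ riverFold o) :
    f ∈ o :=
  (mem_of_mem_foldl_riverStep hf).resolve_left (Finset.notMem_empty f)

theorem riverFold_append_cons (o₁ o₂ : List (V × V)) (e : V × V) :
    riverFold (o₁ ++ e :: o₂) = o₂.foldl riverStep (riverStep (riverFold o₁) e) := by
  simp only [riverFold, List.foldl_append, List.foldl_cons]

theorem riverFold_subset_riverFold_append (o₁ o₂ : List (V × V)) :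
    riverFold o₁ ⊆ riverFold (o₁ ++ o₂) := by
  rw [riverFold, riverFold, List.foldl_append]
  exact subset_foldl_riverStep _ _

theorem reach_riverFold_of_noIncoming (o₁ o₂ : List (V × V)) (e : V × V)
    (hwin : noIncoming (riverFold (o₁ ++ e :: o₂)) e.2) :
    Reach (riverFold o₁) e.2 e.1 := by
  have hsub : riverStep (riverFold o₁) e ⊆ riverFold (o₁ ++ e :: o₂) := by
    rw [riverFold_append_cons]
    exact subset_foldl_riverStep _ _
  have hrejected : (∃ f ∈ riverFold o₁, f.2 = e.2) ∨ Reach (riverFold o₁) e.2 e.1 := by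
    by_contra hc
    have he : e ∈ riverStep (riverFold o₁) e := by
      rw [riverStep, if_neg hc]
      exact Finset.mem_insert_self _ _
    exact hwin e (hsub he) rfl
  rcases hrejected with ⟨f, hf, hf2⟩ | hreach
  · exact absurd hf2 (hwin f (hsub (subset_riverStep _ _ hf)))
  · exact hreach

end River

theorem put_winner_has_strong_path_in_winning_river_diagram_general
    {A : Type*} [Fintype A] {m : ℕ}
    (P : Profile A m) (w x : A)
    (hedge : (x, w) ∈ marginEdges P)
    (o : List (A × A)) (ho : IsDescOrdering (marginE P) (marginEdges P) o)
    (hwin : noIncoming (riverFold o) w) :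
    ∃ l : List A, IsPathFrom (riverFold o) l w x ∧
      ∀ p ∈ l.zip l.tail, marginE P (x, w) ≤ marginE P p := by
  obtain ⟨-, hmem, hdesc⟩ := ho
  obtain ⟨o₁, o₂, rfl⟩ := List.append_of_mem ((hmem _).2 hedge)
  obtain ⟨l, hl⟩ := reach_riverFold_of_noIncoming o₁ o₂ (x, w) hwin
  refine ⟨l, hl.mono (riverFold_subset_riverFold_append _ _), fun p hp => ?_⟩
  have hp₁ : p ∈ o₁ := mem_of_mem_riverFold (hl.mem_of_mem_zip_tail hp)
  exact (List.pairwise_append.1 hdesc).2.2 p hp₁ (x, w) List.mem_cons_self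

/-- Let `w` be a River PUT winner of `P` and let `(x, w)` be an edge of
the margin graph incoming to `w`. Then for every descending linear ordering `o` under
which `w` is a River winner, the River diagram `M^RV(o)` contains a path from `w` to `x`
all of whose edges have margin at least `m_P(x, w)` (i.e. of strength at least
`m_P(x, w)`). -/
theorem put_winner_has_strong_path_in_winning_river_diagram
    {A : Type*} [Fintype A] {m : ℕ} (hm : 1 ≤ m) (hA : 2 ≤ Fintype.card A)
    (P : Profile A m) (w x : A)
    (hput : ∃ o : List (A × A), IsDescOrdering (marginE P) (marginEdges P) o ∧
      noIncoming (riverFold o) w)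
    (hedge : (x, w) ∈ marginEdges P)
    (o : List (A × A)) (ho : IsDescOrdering (marginE P) (marginEdges P) o)
    (hwin : noIncoming (riverFold o) w) :
    ∃ l : List A, IsPathFrom (riverFold o) l w x ∧
      ∀ p ∈ l.zip l.tail, marginE P (x, w) ≤ marginE P p :=
  put_winner_has_strong_path_in_winning_river_diagram_general P w x hedge o ho hwin
end

section
/- Let P be a preference profile whose margin graph M(P) is uniquely weighted, i.e., all edges of M(P) have pairwise distinct margins, so that O↓ contains exactly one descending linear ordering o. Then the semi-River diagram equals the River diagram: sRV(P) = M^RV(o, P). -/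
attribute [local instance] Classical.propDecidable

/-
In a strictly descending ordering every edge already in the diagram has larger margin than the
edge being processed, so the margin filters in (sR1) and (sR2) select the whole current diagram,
and it suffices to compare the two steps on a common diagram. The River diagram is always a
branching (acyclic, every vertex of in-degree at most one). In a branching, (sR1) is (R1): a path
from `y` back to the tail of its incoming edge would close a cycle. If `y` has no incoming edge,
the ancestors of `x` form a chain under reachability, so at most one of them has no incoming edge,
and (sR2) says precisely that `y` is an ancestor of `x`, which is (R2).
-/

open Relation

section Reach

variable {V : Type*} {E E' : Finset (V × V)} {u v x y z : V}

theorem Reach.tail (h : Reach E x y) (hz : (y, z) ∈ E) : Reach E x z := by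
  obtain ⟨l, hne, hnd, hhd, hlast, hch⟩ := h
  by_cases hzl : z ∈ l
  · obtain ⟨s, t, rfl⟩ := List.append_of_mem hzl
    have hpre : (s ++ [z]) <+: (s ++ z :: t) := ⟨t, by simp⟩
    refine ⟨s ++ [z], by simp, hnd.sublist hpre.sublist, ?_, by simp, hch.prefix hpre⟩
    cases s <;> simpa using hhd
  · refine ⟨l ++ [z], by simp, ?_, ?_, by simp, ?_⟩
    · simp only [List.nodup_append, hnd, List.nodup_singleton, true_and]
      rintro a ha b hb rfl
      exact hzl (List.mem_singleton.mp hb ▸ ha)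
    · cases l with
      | nil => exact absurd rfl hne
      | cons a s => simpa using hhd
    · change List.IsChain _ _
      rw [List.isChain_append]
      refine ⟨hch, by simp, fun a ha b hb => ?_⟩
      rw [hlast, Option.mem_some_iff] at ha
      simp only [List.head?_cons, Option.mem_some_iff] at hb
      exact ha ▸ hb ▸ hz

theorem IsPathFrom.reflTransGen {l : List V} (h : IsPathFrom E l x y) :
    ReflTransGen (fun a b => (a, b) ∈ E) x y := by
  induction l generalizing x with
  | nil => exact absurd rfl h.1
  | cons a t ih =>
    obtain ⟨-, hnd, hhd, hlast, hch⟩ := h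
    obtain rfl : a = x := by simpa using hhd
    cases t with
    | nil =>
      obtain rfl : a = y := by simpa using hlast
      exact .refl
    | cons b t =>
      change List.IsChain _ _ at hch
      rw [List.isChain_cons_cons] at hch
      exact .head hch.1 (ih ⟨by simp, hnd.of_cons, rfl,
        by simpa [List.getLast?_cons_cons] using hlast, hch.2⟩)

theorem reach_iff_reflTransGen : Reach E x y ↔ ReflTransGen (fun a b => (a, b) ∈ E) x y := by
  refine ⟨fun ⟨_, hl⟩ => hl.reflTransGen, fun h => ?_⟩
  induction h with
  | refl => exact ⟨[x], by simp [IsPathFrom]; exact List.isChain_singleton _⟩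
  | tail _ hbc ih => exact ih.tail hbc

theorem Reach.mono (hE : E ⊆ E') (h : Reach E x y) : Reach E' x y :=
  reach_iff_reflTransGen.mpr (ReflTransGen.mono (fun _ _ hab => hE hab) _ _
    (reach_iff_reflTransGen.mp h))

theorem Reach.trans (hxy : Reach E x y) (hyz : Reach E y z) : Reach E x z :=
  reach_iff_reflTransGen.mpr
    ((reach_iff_reflTransGen.mp hxy).trans (reach_iff_reflTransGen.mp hyz))

theorem reach_of_mem {e : V × V} (he : e ∈ E) : Reach E e.1 e.2 :=
  reach_iff_reflTransGen.mpr (.single he)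

theorem Reach.of_insert {e : V × V} (h : Reach (insert e E) x y) :
    Reach E x y ∨ Reach E x e.1 ∧ Reach E e.2 y := by
  simp only [reach_iff_reflTransGen] at h ⊢
  induction h with
  | refl => exact .inl .refl
  | tail _ hcd ih =>
    rcases Finset.mem_insert.mp hcd with rfl | hcd
    · exact .inr ⟨ih.elim id And.left, .refl⟩
    · exact ih.imp (·.tail hcd) fun h => ⟨h.1, h.2.tail hcd⟩

theorem Reach.eq_of_noIncoming (h : Reach E u v) (hv : noIncoming E v) : u = v := by
  rcases (reach_iff_reflTransGen.mp h).cases_tail with rfl | ⟨c, -, hcv⟩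
  · rfl
  · exact absurd rfl (hv _ hcv)

theorem eq_of_reach_of_noIncoming (hin : ∀ f ∈ E, ∀ g ∈ E, f.2 = g.2 → f = g)
    (hu : Reach E u x) (hv : Reach E v x) (hu₀ : noIncoming E u) (hv₀ : noIncoming E v) :
    u = v := by
  have hU : Relator.RightUnique (Function.swap fun a b => (a, b) ∈ E) := fun a b c hb hc => by
    simpa using congrArg Prod.fst (hin (b, a) hb (c, a) hc rfl)
  -- the ancestors of `x` are totally ordered by reachability
  rcases (reach_iff_reflTransGen.mp hu).swap.total_of_right_unique hU
      (reach_iff_reflTransGen.mp hv).swap with h | h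
  · exact ((reach_iff_reflTransGen.mpr (reflTransGen_swap.mp h)).eq_of_noIncoming hu₀).symm
  · exact (reach_iff_reflTransGen.mpr (reflTransGen_swap.mp h)).eq_of_noIncoming hv₀

end Reach

structure IsBranching {V : Type*} (D : Finset (V × V)) : Prop where
  inDegree_le_one : ∀ f ∈ D, ∀ g ∈ D, f.2 = g.2 → f = g
  acyclic : ¬ HasCycle D

section River

variable {V : Type*} {D : Finset (V × V)} {e : V × V}

theorem isBranching_empty : IsBranching (∅ : Finset (V × V)) :=
  ⟨by simp, fun ⟨_, hf, _⟩ => Finset.notMem_empty _ hf⟩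

theorem riverStep_subset : riverStep D e ⊆ insert e D := by
  unfold riverStep
  split_ifs
  · exact Finset.subset_insert _ _
  · exact subset_rfl

theorem IsBranching.riverStep (hD : IsBranching D) : IsBranching (riverStep D e) := by
  unfold _root_.riverStep
  split_ifs with hC
  · exact hD
  obtain ⟨hR1, hR2⟩ := not_or.mp hC
  constructor
  · intro f hf g hg hfg
    rcases Finset.mem_insert.mp hf with rfl | hf <;> rcases Finset.mem_insert.mp hg with hg | hg
    · rw [hg]
    · exact absurd ⟨g, hg, hfg.symm⟩ hR1
    · exact absurd ⟨f, hf, hg ▸ hfg⟩ hR1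
    · exact hD.inDegree_le_one f hf g hg hfg
  · rintro ⟨f, hf, hcyc⟩
    rcases Finset.mem_insert.mp hf with rfl | hf
    · exact hR2 (hcyc.of_insert.elim id And.left)
    · rcases hcyc.of_insert with h | ⟨h₁, h₂⟩
      · exact hD.acyclic ⟨f, hf, h⟩
      · exact hR2 ((h₂.trans (reach_of_mem hf)).trans h₁)

theorem semiRiverStep_eq_riverStep {marg : V × V → ℤ} (hlt : ∀ f ∈ D, marg e < marg f)
    (hD : IsBranching D) : semiRiverStep marg D e = riverStep D e := by
  have hSgt : D.filter (fun f => marg e < marg f) = D := Finset.filter_true_of_mem hlt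
  rw [semiRiverStep, _root_.riverStep]
  simp only [hSgt, Set.mem_ofPred_eq]
  refine if_congr ?_ rfl rfl
  by_cases hR1 : ∃ f ∈ D, f.2 = e.2
  · obtain ⟨f, hf, hfe⟩ := hR1
    refine iff_of_true (.inl ⟨f, hf, hfe, fun h => ?_⟩) (.inl ⟨f, hf, hfe⟩)
    exact hD.acyclic ⟨f, hf, hfe ▸ h.mono (Finset.filter_subset _ _)⟩
  have hy : noIncoming D e.2 := fun g hg h => hR1 ⟨g, hg, h⟩
  have hAvoid : D.filter (fun g => g.2 ≠ e.2) = D := Finset.filter_true_of_mem hy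
  simp only [hAvoid]
  refine ⟨fun h => h.imp (fun ⟨f, hf, hfe, _⟩ => ⟨f, hf, hfe⟩) And.left, fun h => ?_⟩
  have hR2 : Reach D e.2 e.1 := h.resolve_left hR1
  refine .inr ⟨hR2, fun ⟨f, hf, hcyc⟩ => ?_, fun v hv => ⟨fun hv₀ => ?_, ?_⟩⟩
  · exact hD.acyclic ⟨f, (Finset.mem_filter.mp hf).1, hcyc.mono (Finset.filter_subset _ _)⟩
  · have hgx {g : V × V} (hgv : g.2 = v) : Reach D g.2 e.1 := by rwa [hgv]
    refine eq_of_reach_of_noIncoming hD.inDegree_le_one hv hR2 (fun g hg hgv => ?_) hy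
    exact hv₀ g (Finset.mem_filter.mpr ⟨hg, (reach_of_mem hg).trans (hgx hgv), hgx hgv⟩) hgv
  · rintro rfl g hg
    exact hy g (Finset.mem_filter.mp hg).1

theorem foldl_semiRiverStep_eq_foldl_riverStep {marg : V × V → ℤ} (o : List (V × V))
    (hlt : ∀ e ∈ o, ∀ f ∈ D, marg e < marg f) (ho : o.Pairwise fun e f => marg f < marg e)
    (hD : IsBranching D) : o.foldl (semiRiverStep marg) D = o.foldl riverStep D := by
  induction o generalizing D with
  | nil => rfl
  | cons e o ih =>
    rw [List.pairwise_cons] at ho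
    rw [List.foldl_cons, List.foldl_cons,
      semiRiverStep_eq_riverStep (hlt e List.mem_cons_self) hD]
    refine ih (fun f hf g hg => ?_) ho.2 hD.riverStep
    rcases Finset.mem_insert.mp (riverStep_subset hg) with rfl | hg
    · exact ho.1 f hf
    · exact hlt f (List.mem_cons_of_mem e hf) g hg

end River

theorem IsDescOrdering.pairwise_lt {V : Type*} {marg : V × V → ℤ} {E : Finset (V × V)}
    {o : List (V × V)} (ho : IsDescOrdering marg E o) (hinj : Set.InjOn marg E) :
    o.Pairwise fun e f => marg f < marg e := by
  obtain ⟨hnd, hmem, hle⟩ := ho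
  refine (hnd.and hle).imp_of_mem fun he hf ⟨hne, hfe⟩ => hfe.lt_of_ne fun h => hne ?_
  exact hinj ((hmem _).mp he) ((hmem _).mp hf) h.symm

theorem semi_river_eq_river_of_uniquely_weighted_general
    {A : Type*} [Fintype A] {m : ℕ}
    (P : Profile A m)
    (huniq : ∀ e ∈ marginEdges P, ∀ f ∈ marginEdges P,
      marginE P e = marginE P f → e = f)
    (o : List (A × A)) (ho : IsDescOrdering (marginE P) (marginEdges P) o) :
    semiRiverFold (marginE P) o = riverFold o :=
  foldl_semiRiverStep_eq_foldl_riverStep o (by simp) (ho.pairwise_lt huniq) isBranching_empty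

/-- If the margin graph of `P` is uniquely weighted (all edges have
pairwise distinct margins), so that there is exactly one descending linear ordering `o`,
then the semi-River diagram equals the River diagram: `sRV(P) = M^RV(o, P)`. -/
theorem semi_river_eq_river_of_uniquely_weighted
    {A : Type*} [Fintype A] {m : ℕ} (hm : 1 ≤ m) (hA : 2 ≤ Fintype.card A)
    (P : Profile A m)
    (huniq : ∀ e ∈ marginEdges P, ∀ f ∈ marginEdges P,
      marginE P e = marginE P f → e = f)
    (o : List (A × A)) (ho : IsDescOrdering (marginE P) (marginEdges P) o) :
    semiRiverFold (marginE P) o = riverFold o :=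
  semi_river_eq_river_of_uniquely_weighted_general P huniq o ho
end
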